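/- arXiv:2412.10517 — 3 statements merged into one kernel-verified Lean document; each statement's English description precedes it below -/
import Mathlib

section
/- Let a < b be real numbers and X, u, v : ℝ → ℝ. Assume: u is differentiable at every point of (-∞, b] with derivative u'; the product v·X is differentiable at every point of (-∞, a) ∪ (a, b), and w : ℝ → ℝ equals its derivative on that set; v·X has finite left and right limits (vX)(a⁻) and (vX)(a⁺) at a, and its value at b equals its left limit at b; (vX)(x)·u(x) → 0 as x → −∞; and both v·X·u' and w·u are Lebesgue integrable on (-∞, b]. Then ∫_{(-∞,b]} v(x) X(x) u'(x) dx = (vX)(a⁻)·u(a) + (vX)(b)·u(b) − (vX)(a⁺)·u(a) − ∫_{(-∞,b]} w(x) u(x) dx. -/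
open MeasureTheory Filter Topology Set

/-!
Apply the fundamental theorem of calculus to `F = (vX)·u`, whose derivative off `a` is
`w u + v X u'`, separately on `(-∞, a]` and `[a, b]`: a jump of `vX` at `a` only changes the
boundary terms, which are computed from one-sided limits of `F`.
-/

section

variable {E : Type*} [NormedAddCommGroup E] [NormedSpace ℝ E] [CompleteSpace E]
  {f f' : ℝ → E} {m fa fa' fb : E}

theorem integral_Iic_of_hasDerivAt_of_tendsto_nhdsWithin_Iio {a : ℝ}
    (hderiv : ∀ x ∈ Iio a, HasDerivAt f (f' x) x) (f'int : IntegrableOn f' (Iic a))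
    (hbot : Tendsto f atBot (𝓝 m)) (ha : Tendsto f (𝓝[<] a) (𝓝 fa)) :
    ∫ x in Iic a, f' x = fa - m := by
  have hcont : ContinuousWithinAt (Function.update f a fa) (Iic a) a := by
    rwa [continuousWithinAt_update_same, Iic_sdiff_right]
  have hderiv' : ∀ x ∈ Iio a, HasDerivAt (Function.update f a fa) (f' x) x := fun x hx =>
    (hderiv x hx).congr_of_eventuallyEq <| by
      filter_upwards [Iio_mem_nhds hx] with y hy using Function.update_of_ne hy.ne _ _
  have hbot' : Tendsto (Function.update f a fa) atBot (𝓝 m) :=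
    hbot.congr' <| by
      filter_upwards [Iio_mem_atBot a] with y hy using (Function.update_of_ne hy.ne _ _).symm
  simpa using integral_Iic_of_hasDerivAt_of_tendsto hcont hderiv' f'int hbot'

theorem integral_Iic_of_hasDerivAt_off_of_tendsto {a b : ℝ} (hab : a < b)
    (hderiv : ∀ x ∈ Iio a ∪ Ioo a b, HasDerivAt f (f' x) x) (f'int : IntegrableOn f' (Iic b))
    (hbot : Tendsto f atBot (𝓝 m)) (ha : Tendsto f (𝓝[<] a) (𝓝 fa))
    (ha' : Tendsto f (𝓝[>] a) (𝓝 fa')) (hb : Tendsto f (𝓝[<] b) (𝓝 fb)) :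
    ∫ x in Iic b, f' x = (fa - m) + (fb - fa') := by
  have hint_left : IntegrableOn f' (Iic a) := f'int.mono_set (Iic_subset_Iic.2 hab.le)
  have hint_right : IntegrableOn f' (Ioc a b) := f'int.mono_set fun _ hx => hx.2
  have hleft : ∫ x in Iic a, f' x = fa - m :=
    integral_Iic_of_hasDerivAt_of_tendsto_nhdsWithin_Iio
      (fun x hx => hderiv x (.inl hx)) hint_left hbot ha
  have hright : ∫ x in Ioc a b, f' x = fb - fa' := by
    rw [← intervalIntegral.integral_of_le hab.le]
    exact intervalIntegral.integral_eq_sub_of_hasDerivAt_of_tendsto hab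
      (fun x hx => hderiv x (.inr hx))
      ((intervalIntegrable_iff_integrableOn_Ioc_of_le hab.le).2 hint_right) ha' hb
  rw [← Iic_union_Ioc_eq_Iic hab.le,
    setIntegral_union (Iic_disjoint_Ioc le_rfl) measurableSet_Ioc hint_left hint_right,
    hleft, hright]

end

/-- Integration by parts on `(-∞, b]`, split at the reset point `a`, for the pairing
`⟨v, A u⟩ = ∫ v X u'` of the hybrid Frobenius-Perron construction. -/
theorem hybrid_integration_by_parts
    (a b : ℝ) (hab : a < b) (X u v u' w : ℝ → ℝ) (vXam vXap : ℝ)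
    (hu : ∀ x ∈ Set.Iic b, HasDerivAt u (u' x) x)
    (hvX : ∀ x ∈ Set.Iio a ∪ Set.Ioo a b, HasDerivAt (fun y => v y * X y) (w x) x)
    (hlim_am : Tendsto (fun y => v y * X y) (nhdsWithin a (Set.Iio a)) (nhds vXam))
    (hlim_ap : Tendsto (fun y => v y * X y) (nhdsWithin a (Set.Ioi a)) (nhds vXap))
    (hlim_b : Tendsto (fun y => v y * X y) (nhdsWithin b (Set.Iio b)) (nhds (v b * X b)))
    (hbot : Tendsto (fun x => v x * X x * u x) atBot (nhds 0))
    (hint1 : IntegrableOn (fun x => v x * X x * u' x) (Set.Iic b))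
    (hint2 : IntegrableOn (fun x => w x * u x) (Set.Iic b)) :
    ∫ x in Set.Iic b, v x * X x * u' x
      = vXam * u a + (v b * X b) * u b - vXap * u a
        - ∫ x in Set.Iic b, w x * u x := by
  have hderiv : ∀ x ∈ Iio a ∪ Ioo a b,
      HasDerivAt (fun y => v y * X y * u y) (w x * u x + v x * X x * u' x) x := by
    rintro x (hx | hx)
    · exact (hvX x (.inl hx)).mul (hu x (hx.trans hab).le)
    · exact (hvX x (.inr hx)).mul (hu x hx.2.le)
  have hu_tendsto {c : ℝ} (hc : c ≤ b) (s : Set ℝ) : Tendsto u (𝓝[s] c) (𝓝 (u c)) :=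
    (hu c hc).continuousAt.continuousWithinAt.tendsto
  have hibp := integral_Iic_of_hasDerivAt_off_of_tendsto hab hderiv (hint2.add hint1) hbot
    (hlim_am.mul (hu_tendsto hab.le _)) (hlim_ap.mul (hu_tendsto hab.le _))
    (hlim_b.mul (hu_tendsto le_rfl _))
  rw [integral_add hint2 hint1] at hibp
  linarith
end

section
/- Let a < b be real numbers and X, H, u, v : ℝ → ℝ. Assume: u is twice differentiable at every point of (-∞, b] with continuous derivatives u', u''; on (-∞, a) ∪ (a, b), the products v·H and v·X are such that H·v is differentiable with derivative (Hv)', and I := v·X − (Hv)' is differentiable with derivative I'; v·H and I have finite one-sided limits (vH)(a⁻), (vH)(a⁺), I(a⁻), I(a⁺) at a, and their values at b equal their left limits at b; (vH·u')(x) → 0 and (I·u)(x) → 0 as x → −∞; and v·(X u' + H u''), I·u', and I'·u are Lebesgue integrable on (-∞, b]. Then ∫_{(-∞,b]} v(x)(X(x)u'(x) + H(x)u''(x)) dx = (vH)(a⁻)u'(a) + (vH)(b)u'(b) − (vH)(a⁺)u'(a) + I(a⁻)u(a) + I(b)u(b) − I(a⁺)u(a) − ∫_{(-∞,b]} I'(x)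 u(x) dx. -/
open MeasureTheory Filter Topology Set

/-- Double integration by parts on `(-∞, b]`, split at the reset point `a`, for the
stochastic Koopman generator `A u = X u' + H u''` and the flux `I = vX − (Hv)'`. -/
theorem hybrid_double_integration_by_parts
    (a b : ℝ) (hab : a < b) (X H u v u' u'' Hv' I I' : ℝ → ℝ)
    (vHam vHap Iam Iap : ℝ)
    (hu1 : ∀ x ∈ Set.Iic b, HasDerivAt u (u' x) x)
    (hu2 : ∀ x ∈ Set.Iic b, HasDerivAt u' (u'' x) x)
    (hu'c : ContinuousOn u' (Set.Iic b))
    (hu''c : ContinuousOn u'' (Set.Iic b))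
    (hHv : ∀ x ∈ Set.Iio a ∪ Set.Ioo a b, HasDerivAt (fun y => H y * v y) (Hv' x) x)
    (hIdef : ∀ x, I x = v x * X x - Hv' x)
    (hIdiff : ∀ x ∈ Set.Iio a ∪ Set.Ioo a b, HasDerivAt I (I' x) x)
    (hvH_am : Tendsto (fun x => v x * H x) (nhdsWithin a (Set.Iio a)) (nhds vHam))
    (hvH_ap : Tendsto (fun x => v x * H x) (nhdsWithin a (Set.Ioi a)) (nhds vHap))
    (hvH_b : Tendsto (fun x => v x * H x) (nhdsWithin b (Set.Iio b)) (nhds (v b * H b)))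
    (hI_am : Tendsto I (nhdsWithin a (Set.Iio a)) (nhds Iam))
    (hI_ap : Tendsto I (nhdsWithin a (Set.Ioi a)) (nhds Iap))
    (hI_b : Tendsto I (nhdsWithin b (Set.Iio b)) (nhds (I b)))
    (hbot1 : Tendsto (fun x => v x * H x * u' x) atBot (nhds 0))
    (hbot2 : Tendsto (fun x => I x * u x) atBot (nhds 0))
    (hint1 : IntegrableOn (fun x => v x * (X x * u' x + H x * u'' x)) (Set.Iic b))
    (hint2 : IntegrableOn (fun x => I x * u' x) (Set.Iic b))
    (hint3 : IntegrableOn (fun x => I' x * u x) (Set.Iic b)) :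
    ∫ x in Set.Iic b, v x * (X x * u' x + H x * u'' x)
      = vHam * u' a + (v b * H b) * u' b - vHap * u' a
        + Iam * u a + I b * u b - Iap * u a
        - ∫ x in Set.Iic b, I' x * u x := by
  -- abbreviations
  set F1 : ℝ → ℝ := fun x => H x * v x * u' x with hF1def
  set F1' : ℝ → ℝ := fun x => Hv' x * u' x + H x * v x * u'' x with hF1'def
  set F2 : ℝ → ℝ := fun x => I x * u x with hF2def
  set F2' : ℝ → ℝ := fun x => I' x * u x + I x * u' x with hF2'def
  -- continuity of u, u' at points of Iic b
  have hu_cont : ∀ x ∈ Set.Iic b, Tendsto u (𝓝 x) (𝓝 (u x)) :=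
    fun x hx => (hu1 x hx).continuousAt
  have hu'_cont : ∀ x ∈ Set.Iic b, Tendsto u' (𝓝 x) (𝓝 (u' x)) :=
    fun x hx => (hu2 x hx).continuousAt
  -- integrability
  have hintF1' : IntegrableOn F1' (Set.Iic b) := by
    have := hint1.sub hint2
    exact this.congr (Filter.Eventually.of_forall fun x => by
      simp only [hF1'def, hIdef, Pi.sub_apply]; ring)
  have hintF2' : IntegrableOn F2' (Set.Iic b) := hint3.add hint2
  -- splitting the integral at a
  have split : ∀ f : ℝ → ℝ, IntegrableOn f (Set.Iic b) →
      ∫ x in Set.Iic b, f x = (∫ x in Set.Iic a, f x) + ∫ x in Set.Ioc a b, f x := by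
    intro f hf
    rw [← Set.Iic_union_Ioc_eq_Iic hab.le,
      setIntegral_union (Set.Iic_disjoint_Ioc le_rfl) measurableSet_Ioc
        (hf.mono_set (Set.Iic_subset_Iic.2 hab.le))
        (hf.mono_set Set.Ioc_subset_Iic_self)]
  -- derivatives of F1 and F2 on (-∞,a) ∪ (a,b)
  have hF1deriv : ∀ x ∈ Set.Iio a ∪ Set.Ioo a b, HasDerivAt F1 (F1' x) x := by
    intro x hx
    have hxb : x ∈ Set.Iic b := by
      rcases hx with hx | hx
      · exact le_of_lt (lt_trans hx hab)
      · exact le_of_lt hx.2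
    exact (hHv x hx).mul (hu2 x hxb)
  have hF2deriv : ∀ x ∈ Set.Iio a ∪ Set.Ioo a b, HasDerivAt F2 (F2' x) x := by
    intro x hx
    have hxb : x ∈ Set.Iic b := by
      rcases hx with hx | hx
      · exact le_of_lt (lt_trans hx hab)
      · exact le_of_lt hx.2
    exact (hIdiff x hx).mul (hu1 x hxb)
  -- the left filter at a is below the Iic a neighborhood filter via the sup decomposition
  have hIic_le : (𝓝[Set.Iic a] a : Filter ℝ) ≤ 𝓝[Set.Iio a] a ⊔ pure a := by
    rw [← nhdsWithin_singleton, ← nhdsWithin_union]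
    apply nhdsWithin_mono
    intro x hx
    rcases lt_or_eq_of_le (show x ≤ a from hx) with h | h
    · exact Or.inl h
    · exact Or.inr h
  -- ===== F1 on Iic a =====
  have A1 : ∫ x in Set.Iic a, F1' x = vHam * u' a := by
    set G : ℝ → ℝ := Function.update F1 a (vHam * u' a) with hG
    have hGleft : Tendsto G (𝓝[Set.Iio a] a) (𝓝 (vHam * u' a)) := by
      have h1 : Tendsto F1 (𝓝[Set.Iio a] a) (𝓝 (vHam * u' a)) := by
        have hvH : Tendsto (fun x => H x * v x) (𝓝[Set.Iio a] a) (𝓝 vHam) :=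
          hvH_am.congr (fun x => mul_comm (v x) (H x))
        exact hvH.mul ((hu'_cont a hab.le).mono_left nhdsWithin_le_nhds)
      refine h1.congr' ?_
      filter_upwards [self_mem_nhdsWithin] with y hy
      exact (Function.update_of_ne (ne_of_lt hy) _ _).symm
    have hGcont : ContinuousWithinAt G (Set.Iic a) a := by
      have hpure : Tendsto G (pure a : Filter ℝ) (𝓝 (G a)) := tendsto_pure_nhds G a
      have : Tendsto G (𝓝[Set.Iio a] a ⊔ pure a) (𝓝 (G a)) := by
        rw [tendsto_sup]
        refine ⟨?_, hpure⟩
        rw [hG]; rw [Function.update_self]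
        exact hGleft
      exact this.mono_left hIic_le
    have hGderiv : ∀ x ∈ Set.Iio a, HasDerivAt G (F1' x) x := by
      intro x hx
      refine (hF1deriv x (Or.inl hx)).congr_of_eventuallyEq ?_
      filter_upwards [Iio_mem_nhds hx] with y hy
      exact Function.update_of_ne (ne_of_lt hy) _ _
    have hGbot : Tendsto G atBot (𝓝 0) := by
      have h1 : Tendsto F1 atBot (𝓝 0) :=
        hbot1.congr (fun x => by simp only [hF1def]; ring)
      refine h1.congr' ?_
      filter_upwards [Iio_mem_atBot a] with y hy
      exact (Function.update_of_ne (ne_of_lt hy) _ _).symm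
    have := integral_Iic_of_hasDerivAt_of_tendsto hGcont hGderiv
      (hintF1'.mono_set (Set.Iic_subset_Iic.2 hab.le)) hGbot
    rw [this, hG, Function.update_self, sub_zero]
  -- ===== F1 on Ioc a b =====
  have A2 : ∫ x in Set.Ioc a b, F1' x = v b * H b * u' b - vHap * u' a := by
    have ha : Tendsto F1 (𝓝[Set.Ioi a] a) (𝓝 (vHap * u' a)) := by
      have hvH : Tendsto (fun x => H x * v x) (𝓝[Set.Ioi a] a) (𝓝 vHap) :=
        hvH_ap.congr (fun x => mul_comm (v x) (H x))
      exact hvH.mul ((hu'_cont a hab.le).mono_left nhdsWithin_le_nhds)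
    have hb : Tendsto F1 (𝓝[Set.Iio b] b) (𝓝 (v b * H b * u' b)) := by
      have hvH : Tendsto (fun x => H x * v x) (𝓝[Set.Iio b] b) (𝓝 (v b * H b)) :=
        hvH_b.congr (fun x => mul_comm (v x) (H x))
      have := hvH.mul ((hu'_cont b Set.self_mem_Iic).mono_left nhdsWithin_le_nhds)
      exact this
    have hderiv : ∀ x ∈ Set.Ioo a b, HasDerivAt F1 (F1' x) x :=
      fun x hx => hF1deriv x (Or.inr hx)
    have hii : IntervalIntegrable F1' volume a b := by
      rw [intervalIntegrable_iff_integrableOn_Ioc_of_le hab.le]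
      exact hintF1'.mono_set Set.Ioc_subset_Iic_self
    have := intervalIntegral.integral_eq_sub_of_hasDerivAt_of_tendsto hab hderiv hii ha hb
    rw [← intervalIntegral.integral_of_le hab.le, this]
  -- ===== F2 on Iic a =====
  have B1 : ∫ x in Set.Iic a, F2' x = Iam * u a := by
    set G : ℝ → ℝ := Function.update F2 a (Iam * u a) with hG
    have hGleft : Tendsto G (𝓝[Set.Iio a] a) (𝓝 (Iam * u a)) := by
      have h1 : Tendsto F2 (𝓝[Set.Iio a] a) (𝓝 (Iam * u a)) :=
        hI_am.mul ((hu_cont a hab.le).mono_left nhdsWithin_le_nhds)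
      refine h1.congr' ?_
      filter_upwards [self_mem_nhdsWithin] with y hy
      exact (Function.update_of_ne (ne_of_lt hy) _ _).symm
    have hGcont : ContinuousWithinAt G (Set.Iic a) a := by
      have hpure : Tendsto G (pure a : Filter ℝ) (𝓝 (G a)) := tendsto_pure_nhds G a
      have : Tendsto G (𝓝[Set.Iio a] a ⊔ pure a) (𝓝 (G a)) := by
        rw [tendsto_sup]
        refine ⟨?_, hpure⟩
        rw [hG]; rw [Function.update_self]
        exact hGleft
      exact this.mono_left hIic_le
    have hGderiv : ∀ x ∈ Set.Iio a, HasDerivAt G (F2' x) x := by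
      intro x hx
      refine (hF2deriv x (Or.inl hx)).congr_of_eventuallyEq ?_
      filter_upwards [Iio_mem_nhds hx] with y hy
      exact Function.update_of_ne (ne_of_lt hy) _ _
    have hGbot : Tendsto G atBot (𝓝 0) := by
      refine hbot2.congr' ?_
      filter_upwards [Iio_mem_atBot a] with y hy
      exact (Function.update_of_ne (ne_of_lt hy) _ _).symm
    have := integral_Iic_of_hasDerivAt_of_tendsto hGcont hGderiv
      (hintF2'.mono_set (Set.Iic_subset_Iic.2 hab.le)) hGbot
    rw [this, hG, Function.update_self, sub_zero]
  -- ===== F2 on Ioc a b =====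
  have B2 : ∫ x in Set.Ioc a b, F2' x = I b * u b - Iap * u a := by
    have ha : Tendsto F2 (𝓝[Set.Ioi a] a) (𝓝 (Iap * u a)) :=
      hI_ap.mul ((hu_cont a hab.le).mono_left nhdsWithin_le_nhds)
    have hb : Tendsto F2 (𝓝[Set.Iio b] b) (𝓝 (I b * u b)) :=
      hI_b.mul ((hu_cont b Set.self_mem_Iic).mono_left nhdsWithin_le_nhds)
    have hderiv : ∀ x ∈ Set.Ioo a b, HasDerivAt F2 (F2' x) x :=
      fun x hx => hF2deriv x (Or.inr hx)
    have hii : IntervalIntegrable F2' volume a b := by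
      rw [intervalIntegrable_iff_integrableOn_Ioc_of_le hab.le]
      exact hintF2'.mono_set Set.Ioc_subset_Iic_self
    have := intervalIntegral.integral_eq_sub_of_hasDerivAt_of_tendsto hab hderiv hii ha hb
    rw [← intervalIntegral.integral_of_le hab.le, this]
  -- total integrals of F1' and F2'
  have hF1tot : ∫ x in Set.Iic b, F1' x
      = vHam * u' a + (v b * H b * u' b - vHap * u' a) := by
    rw [split F1' hintF1', A1, A2]
  have hF2tot : ∫ x in Set.Iic b, F2' x
      = Iam * u a + (I b * u b - Iap * u a) := by
    rw [split F2' hintF2', B1, B2]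
  -- decompose the main integrand:  v(Xu' + Hu'') = I u' + F1'
  have hmain : ∫ x in Set.Iic b, v x * (X x * u' x + H x * u'' x)
      = (∫ x in Set.Iic b, I x * u' x) + ∫ x in Set.Iic b, F1' x := by
    rw [← integral_add hint2 hintF1']
    refine setIntegral_congr_fun measurableSet_Iic (fun x _ => ?_)
    simp only [hF1'def, hIdef]; ring
  -- decompose F2' integral
  have hF2sum : ∫ x in Set.Iic b, F2' x
      = (∫ x in Set.Iic b, I' x * u x) + ∫ x in Set.Iic b, I x * u' x := by
    rw [← integral_add hint3 hint2]
  rw [hmain, hF1tot]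
  have : (∫ x in Set.Iic b, I x * u' x)
      = Iam * u a + (I b * u b - Iap * u a) - ∫ x in Set.Iic b, I' x * u x := by
    have := hF2sum.symm.trans hF2tot
    linarith
  rw [this]; ring
end

section
/- Let a < b be real numbers and X, H, u, v : ℝ → ℝ satisfying: u is twice differentiable at every point of (-∞, b] with continuous u', u''; on (-∞, a) ∪ (a, b), H·v is differentiable with derivative (Hv)' and I := v·X − (Hv)' is differentiable with derivative I'; v·H and I have finite one-sided limits at a and values at b equal to their left limits at b; (vH·u')(x) → 0 and (I·u)(x) → 0 as x → −∞; v·(X u' + H u''), I·u', and I'·u are Lebesgue integrable on (-∞, b]. If moreover u(a) = u(b), (vH)(a⁺) = (vH)(a⁻), (vH)(b) = 0, and I(b) = I(a⁺) − I(a⁻), then ∫_{(-∞,b]} v(x)(X(x)u'(x) + H(x)u''(x)) dx = ∫_{(-∞,b]} (−I'(x)) u(x) dx. -/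
open MeasureTheory Filter Topology Set

/-!
Lagrange's identity: on each smooth piece, `v · A u − (A* v) · u` is the derivative of the
concomitant `F = vH u' + I u`. Integrating over `(-∞, a)` and `(a, b)` gives
`⟨v, A u⟩ − ⟨A* v, u⟩ = F(a⁻) + F(b) − F(a⁺)`, and the boundary conditions make the jump of `F`
at the reset point `a` cancel its value at the guard `b`.
-/

variable {E : Type*} [NormedAddCommGroup E] [NormedSpace ℝ E] [CompleteSpace E]

theorem integral_Iic_of_hasDerivAt_of_tendsto_nhdsLT {f f' : ℝ → E} {a : ℝ} {l m : E}
    (hderiv : ∀ x ∈ Iio a, HasDerivAt f (f' x) x) (f'int : IntegrableOn f' (Iic a))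
    (ha : Tendsto f (𝓝[<] a) (𝓝 l)) (hbot : Tendsto f atBot (𝓝 m)) :
    ∫ x in Iic a, f' x = l - m := by
  classical
  have hcont : ContinuousWithinAt (Function.update f a l) (Iic a) a := by
    rwa [continuousWithinAt_update_same, Iic_sdiff_right]
  have hderiv' : ∀ x ∈ Iio a, HasDerivAt (Function.update f a l) (f' x) x := fun x hx =>
    (hderiv x hx).congr_of_eventuallyEq <| by
      filter_upwards [Iio_mem_nhds hx] with y hy using Function.update_of_ne hy.ne _ _
  have hbot' : Tendsto (Function.update f a l) atBot (𝓝 m) :=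
    hbot.congr' <| by
      filter_upwards [eventually_lt_atBot a] with y hy using (Function.update_of_ne hy.ne _ _).symm
  simpa using integral_Iic_of_hasDerivAt_of_tendsto hcont hderiv' f'int hbot'

theorem integral_Iic_of_hasDerivAt_of_tendsto_of_jump {f f' : ℝ → E} {a b : ℝ} {la ra lb m : E}
    (hab : a < b) (hderiv : ∀ x ∈ Iio a ∪ Ioo a b, HasDerivAt f (f' x) x)
    (f'int : IntegrableOn f' (Iic b)) (ha_left : Tendsto f (𝓝[<] a) (𝓝 la))
    (ha_right : Tendsto f (𝓝[>] a) (𝓝 ra)) (hb : Tendsto f (𝓝[<] b) (𝓝 lb))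
    (hbot : Tendsto f atBot (𝓝 m)) :
    ∫ x in Iic b, f' x = (la - m) + (lb - ra) := by
  have f'int_a : IntegrableOn f' (Iic a) := f'int.mono_set (Iic_subset_Iic.2 hab.le)
  have f'int_ab : IntervalIntegrable f' volume a b :=
    (intervalIntegrable_iff_integrableOn_Ioc_of_le hab.le).2 (f'int.mono_set Ioc_subset_Iic_self)
  rw [← sub_add_cancel (∫ x in Iic b, f' x) (∫ x in Iic a, f' x),
    intervalIntegral.integral_Iic_sub_Iic f'int_a f'int,
    intervalIntegral.integral_eq_sub_of_hasDerivAt_of_tendsto hab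
      (fun x hx => hderiv x (Or.inr hx)) f'int_ab ha_right hb,
    integral_Iic_of_hasDerivAt_of_tendsto_nhdsLT (fun x hx => hderiv x (Or.inl hx)) f'int_a
      ha_left hbot]
  abel

theorem hasDerivAt_concomitant {X H u v u' u'' I : ℝ → ℝ} {x Hv' I' : ℝ}
    (hHv : HasDerivAt (fun y => H y * v y) Hv' x) (hI : I x = v x * X x - Hv')
    (hIderiv : HasDerivAt I I' x) (hu : HasDerivAt u (u' x) x) (hu' : HasDerivAt u' (u'' x) x) :
    HasDerivAt (fun y => v y * H y * u' y + I y * u y)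
      (v x * (X x * u' x + H x * u'' x) + I' * u x) x := by
  have hvH : HasDerivAt (fun y => v y * H y) Hv' x :=
    hHv.congr_of_eventuallyEq (.of_forall fun y => mul_comm (v y) (H y))
  exact ((hvH.mul hu').add (hIderiv.mul hu)).congr_deriv (by rw [hI]; ring)

theorem hybrid_FP_adjoint_stochastic_general
    (a b : ℝ) (hab : a < b) (X H u v u' u'' Hv' I I' : ℝ → ℝ)
    (vHam vHap Iam Iap : ℝ)
    (hu1 : ∀ x ∈ Set.Iic b, HasDerivAt u (u' x) x)
    (hu2 : ∀ x ∈ Set.Iic b, HasDerivAt u' (u'' x) x)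
    (hHv : ∀ x ∈ Set.Iio a ∪ Set.Ioo a b, HasDerivAt (fun y => H y * v y) (Hv' x) x)
    (hIdef : ∀ x, I x = v x * X x - Hv' x)
    (hIdiff : ∀ x ∈ Set.Iio a ∪ Set.Ioo a b, HasDerivAt I (I' x) x)
    (hvH_am : Tendsto (fun x => v x * H x) (nhdsWithin a (Set.Iio a)) (nhds vHam))
    (hvH_ap : Tendsto (fun x => v x * H x) (nhdsWithin a (Set.Ioi a)) (nhds vHap))
    (hvH_b : Tendsto (fun x => v x * H x) (nhdsWithin b (Set.Iio b)) (nhds (v b * H b)))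
    (hI_am : Tendsto I (nhdsWithin a (Set.Iio a)) (nhds Iam))
    (hI_ap : Tendsto I (nhdsWithin a (Set.Ioi a)) (nhds Iap))
    (hI_b : Tendsto I (nhdsWithin b (Set.Iio b)) (nhds (I b)))
    (hbot1 : Tendsto (fun x => v x * H x * u' x) atBot (nhds 0))
    (hbot2 : Tendsto (fun x => I x * u x) atBot (nhds 0))
    (hint1 : IntegrableOn (fun x => v x * (X x * u' x + H x * u'' x)) (Set.Iic b))
    (hint3 : IntegrableOn (fun x => I' x * u x) (Set.Iic b))
    (hub : u a = u b)
    (hbc1 : vHap = vHam)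
    (hbc2 : v b * H b = 0)
    (hbc3 : I b = Iap - Iam) :
    ∫ x in Set.Iic b, v x * (X x * u' x + H x * u'' x)
      = ∫ x in Set.Iic b, (-I' x) * u x := by
  have hpieces : Iio a ∪ Ioo a b ⊆ Iic b :=
    union_subset (Iio_subset_Iic_self.trans (Iic_subset_Iic.2 hab.le)) (Ioo_subset_Ioc_self.trans Ioc_subset_Iic_self)
  have hlim : ∀ {l : Filter ℝ} {c p q : ℝ}, l ≤ 𝓝 c → c ∈ Iic b →
      Tendsto (fun x => v x * H x) l (𝓝 p) → Tendsto I l (𝓝 q) →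
      Tendsto (fun x => v x * H x * u' x + I x * u x) l (𝓝 (p * u' c + q * u c)) :=
    fun hl hc hvH hI => (hvH.mul ((hu2 _ hc).continuousAt.tendsto.mono_left hl)).add
      (hI.mul ((hu1 _ hc).continuousAt.tendsto.mono_left hl))
  have key := integral_Iic_of_hasDerivAt_of_tendsto_of_jump hab
    (fun x hx => hasDerivAt_concomitant (hHv x hx) (hIdef x) (hIdiff x hx) (hu1 x (hpieces hx))
      (hu2 x (hpieces hx)))
    (hint1.add hint3)
    (hlim nhdsWithin_le_nhds hab.le hvH_am hI_am) (hlim nhdsWithin_le_nhds hab.le hvH_ap hI_ap)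
    (hlim nhdsWithin_le_nhds self_mem_Iic hvH_b hI_b) (by simpa using hbot1.add hbot2)
  rw [integral_add hint1 hint3, hbc1, hbc2, hbc3, hub] at key
  simp_rw [neg_mul, integral_neg]
  linear_combination key

/-- Theorem 4 of the paper: with the boundary conditions `u(a) = u(b)`,
`(vH)(a⁺) = (vH)(a⁻)`, `(vH)(b) = 0`, and `I(b) = I(a⁺) − I(a⁻)`, the stochastic
Koopman generator `A u = X u' + H u''` satisfies `⟨v, A u⟩ = ⟨−I', u⟩` on `(-∞, b]`. -/
theorem hybrid_FP_adjoint_stochastic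
    (a b : ℝ) (hab : a < b) (X H u v u' u'' Hv' I I' : ℝ → ℝ)
    (vHam vHap Iam Iap : ℝ)
    (hu1 : ∀ x ∈ Set.Iic b, HasDerivAt u (u' x) x)
    (hu2 : ∀ x ∈ Set.Iic b, HasDerivAt u' (u'' x) x)
    (hu'c : ContinuousOn u' (Set.Iic b))
    (hu''c : ContinuousOn u'' (Set.Iic b))
    (hHv : ∀ x ∈ Set.Iio a ∪ Set.Ioo a b, HasDerivAt (fun y => H y * v y) (Hv' x) x)
    (hIdef : ∀ x, I x = v x * X x - Hv' x)
    (hIdiff : ∀ x ∈ Set.Iio a ∪ Set.Ioo a b, HasDerivAt I (I' x) x)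
    (hvH_am : Tendsto (fun x => v x * H x) (nhdsWithin a (Set.Iio a)) (nhds vHam))
    (hvH_ap : Tendsto (fun x => v x * H x) (nhdsWithin a (Set.Ioi a)) (nhds vHap))
    (hvH_b : Tendsto (fun x => v x * H x) (nhdsWithin b (Set.Iio b)) (nhds (v b * H b)))
    (hI_am : Tendsto I (nhdsWithin a (Set.Iio a)) (nhds Iam))
    (hI_ap : Tendsto I (nhdsWithin a (Set.Ioi a)) (nhds Iap))
    (hI_b : Tendsto I (nhdsWithin b (Set.Iio b)) (nhds (I b)))
    (hbot1 : Tendsto (fun x => v x * H x * u' x) atBot (nhds 0))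
    (hbot2 : Tendsto (fun x => I x * u x) atBot (nhds 0))
    (hint1 : IntegrableOn (fun x => v x * (X x * u' x + H x * u'' x)) (Set.Iic b))
    (hint2 : IntegrableOn (fun x => I x * u' x) (Set.Iic b))
    (hint3 : IntegrableOn (fun x => I' x * u x) (Set.Iic b))
    (hub : u a = u b)
    (hbc1 : vHap = vHam)
    (hbc2 : v b * H b = 0)
    (hbc3 : I b = Iap - Iam) :
    ∫ x in Set.Iic b, v x * (X x * u' x + H x * u'' x)
      = ∫ x in Set.Iic b, (-I' x) * u x :=
  hybrid_FP_adjoint_stochastic_general a b hab X H u v u' u'' Hv' I I' vHam vHap Iam Iap hu1 hu2 hHv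
    hIdef hIdiff hvH_am hvH_ap hvH_b hI_am hI_ap hI_b hbot1 hbot2 hint1 hint3 hub hbc1 hbc2 hbc3
end
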